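/- Uniqueness via the distance function: suppose u: ℝ^n × [0,T] → N_{δ_N} ⊂ ℝ^l is a smooth bounded solution of ∂_t u + (−1)^m Δ^m u = F(u) with u(·,0) taking values in N, where F(u) ∈ T_{Π(u)} N pointwise, and ρ(u) = ½|u − Π(u)|² satisfies ∫_{ℝ^n} ρ(u(·,t)) < ∞ for all t with d/dt ∫_{ℝ^n} ρ(u) + ∫_{ℝ^n} |∇^m Q(u)|² = −∫_{ℝ^n} ⟨DΠ(u)(F(u)), Q(u)⟩, where Q(u) = u − Π(u). Then ρ(u) ≡ 0, i.e., u(x,t) ∈ N for all (x,t) ∈ ℝ^n × [0,T]. -/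

import Mathlib

open MeasureTheory Metric

/-- The set of tangent vectors to `N ⊂ ℝ^l` at a point `q`, given by velocities of
curves in `N` through `q`. -/
def TangentVectors {l : ℕ} (N : Set (EuclideanSpace ℝ (Fin l)))
    (q : EuclideanSpace ℝ (Fin l)) : Set (EuclideanSpace ℝ (Fin l)) :=
  {v | ∃ γ : ℝ → EuclideanSpace ℝ (Fin l),
    (∀ t, γ t ∈ N) ∧ γ 0 = q ∧ HasDerivAt γ v 0}

/-- The Laplacian of a function on `ℝ^n`, as the sum of second partial derivatives. -/
noncomputable def lap {n : ℕ} {F : Type*} [NormedAddCommGroup F] [NormedSpace ℝ F]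
    (f : EuclideanSpace ℝ (Fin n) → F) (x : EuclideanSpace ℝ (Fin n)) : F :=
  ∑ i : Fin n,
    fderiv ℝ (fun y => fderiv ℝ f y (EuclideanSpace.single i 1)) x (EuclideanSpace.single i 1)

/-- uniqueness via the distance function: a smooth bounded solution of
`∂_t u + (-1)^m Δ^m u = F(u)` with values in the tubular neighborhood, tangential
nonlinearity, initial data in `N`, and the stated energy identity for
`ρ(u) = ½|u - pr(u)|²`, stays in `N` for all time. -/
theorem stays_on_manifold (n m l : ℕ) (hn : 1 ≤ n) (hm : 1 ≤ m)
    (N : Set (EuclideanSpace ℝ (Fin l))) (hN : IsCompact N) (hNne : N.Nonempty)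
    (δN : ℝ) (hδN : 0 < δN)
    (pr : EuclideanSpace ℝ (Fin l) → EuclideanSpace ℝ (Fin l))
    (hprsmooth : ContDiffOn ℝ (⊤ : ℕ∞) pr {p | infDist p N < δN})
    (hprmem : ∀ y, infDist y N < δN → pr y ∈ N)
    (hprnearest : ∀ y, infDist y N < δN → dist y (pr y) = infDist y N)
    (T : ℝ) (hT : 0 < T)
    (u Fu : EuclideanSpace ℝ (Fin n) → ℝ → EuclideanSpace ℝ (Fin l))
    (husmooth : ContDiff ℝ (⊤ : ℕ∞) (fun p : EuclideanSpace ℝ (Fin n) × ℝ => u p.1 p.2))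
    (K : ℝ) (hubd : ∀ x t, ‖u x t‖ ≤ K)
    (hutube : ∀ x, ∀ t ∈ Set.Icc (0 : ℝ) T, infDist (u x t) N < δN)
    (hu0 : ∀ x, u x 0 ∈ N)
    -- the equation `∂_t u + (-1)^m Δ^m u = F(u)`
    (heq : ∀ x, ∀ t ∈ Set.Icc (0 : ℝ) T,
      deriv (fun s => u x s) t +
        ((-1 : ℝ)) ^ m •
          ((lap (n := n) (F := EuclideanSpace ℝ (Fin l)))^[m] (fun y => u y t)) x = Fu x t)
    -- `F(u) ∈ T_{pr(u)}N` pointwise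
    (htan : ∀ x, ∀ t ∈ Set.Icc (0 : ℝ) T, Fu x t ∈ TangentVectors N (pr (u x t)))
    -- finiteness of `∫ ρ(u)`
    (hρint : ∀ t ∈ Set.Icc (0 : ℝ) T,
      Integrable (fun x => (1 / 2 : ℝ) * ‖u x t - pr (u x t)‖ ^ 2))
    -- the energy identity
    (henergy : ∀ t ∈ Set.Icc (0 : ℝ) T,
      HasDerivAt (fun s => ∫ x, (1 / 2 : ℝ) * ‖u x s - pr (u x s)‖ ^ 2)
        (-(∫ x, ‖iteratedFDeriv ℝ m (fun y => u y t - pr (u y t)) x‖ ^ 2) -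
          ∫ x, (inner ℝ (fderiv ℝ pr (u x t) (Fu x t)) (u x t - pr (u x t)) : ℝ)) t) :
    ∀ x, ∀ t ∈ Set.Icc (0 : ℝ) T, u x t ∈ N := by
  set Ω : Set (EuclideanSpace ℝ (Fin l)) := {p | infDist p N < δN} with hΩ
  have hΩopen : IsOpen Ω :=
    isOpen_lt (continuous_infDist_pt N) continuous_const
  -- Step 1: the inner term vanishes pointwise
  have hinner : ∀ x, ∀ t ∈ Set.Icc (0 : ℝ) T,
      (inner ℝ (fderiv ℝ pr (u x t) (Fu x t)) (u x t - pr (u x t)) : ℝ) = 0 := by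
    intro x t ht
    set y := u x t with hy
    set w := Fu x t with hw
    have hyΩ : y ∈ Ω := hutube x t ht
    have hprdiff : DifferentiableAt ℝ pr y :=
      (hprsmooth.contDiffAt (hΩopen.mem_nhds hyΩ)).differentiableAt
        (by norm_num)
    set D : EuclideanSpace ℝ (Fin l) := fderiv ℝ pr y w with hD
    have hline : HasDerivAt (fun s : ℝ => y + s • w) w 0 := by
      simpa using ((hasDerivAt_id (0 : ℝ)).smul_const w).const_add y
    have h0 : y + (0 : ℝ) • w = y := by simp
    have hF : HasFDerivAt pr (fderiv ℝ pr y) (y + (0 : ℝ) • w) := by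
      rw [h0]; exact hprdiff.hasFDerivAt
    have hcurve : HasDerivAt (fun s : ℝ => pr (y + s • w)) D 0 :=
      hF.comp_hasDerivAt 0 hline
    have hg : HasDerivAt (fun s : ℝ => y - pr (y + s • w)) (-D) 0 :=
      hcurve.const_sub y
    have hf := hg.inner ℝ hg
    -- local minimum at 0
    have hmin : IsLocalMin
        (fun s : ℝ => (inner ℝ (y - pr (y + s • w)) (y - pr (y + s • w)) : ℝ)) 0 := by
      have hcont : ContinuousAt (fun s : ℝ => y + s • w) 0 :=
        (continuous_const.add (continuous_id.smul continuous_const)).continuousAt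
      have hev : ∀ᶠ s : ℝ in nhds 0, y + s • w ∈ Ω := by
        apply hcont
        show Ω ∈ nhds (y + (0 : ℝ) • w)
        rw [h0]
        exact hΩopen.mem_nhds hyΩ
      refine hev.mono fun s hs => ?_
      have h1 : pr (y + s • w) ∈ N := hprmem _ hs
      have h2 : infDist y N ≤ dist y (pr (y + s • w)) := infDist_le_dist_of_mem h1
      have h3 : dist y (pr y) = infDist y N := hprnearest y hyΩ
      have h4 : ‖y - pr y‖ ≤ ‖y - pr (y + s • w)‖ := by
        rw [← dist_eq_norm, ← dist_eq_norm, h3]; exact h2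
      simp only [real_inner_self_eq_norm_sq, zero_smul, add_zero]
      have hnn : (0 : ℝ) ≤ ‖y - pr y‖ := norm_nonneg _
      nlinarith [norm_nonneg (y - pr (y + s • w))]
    have hzero := hmin.hasDerivAt_eq_zero hf
    have hzero' : (inner ℝ (y - pr y) (-D) : ℝ) + inner ℝ (-D) (y - pr y) = 0 := by
      simpa [h0] using hzero
    have hsym : (inner ℝ (-D) (y - pr y) : ℝ) = inner ℝ (y - pr y) (-D) :=
      real_inner_comm _ _
    rw [hsym] at hzero'
    have h5 : (inner ℝ (y - pr y) (-D) : ℝ) = 0 := by linarith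
    rw [inner_neg_right] at h5
    have h6 : (inner ℝ (y - pr y) D : ℝ) = 0 := by linarith
    rw [real_inner_comm] at h6
    exact h6
  -- Step 2: the energy is nonincreasing on [0,T]
  set E : ℝ → ℝ := fun s => ∫ x, (1 / 2 : ℝ) * ‖u x s - pr (u x s)‖ ^ 2 with hE
  have hE' : ∀ t ∈ Set.Icc (0 : ℝ) T,
      HasDerivAt E (-(∫ x, ‖iteratedFDeriv ℝ m (fun y => u y t - pr (u y t)) x‖ ^ 2)) t := by
    intro t ht
    have hed := henergy t ht
    have hz : (∫ x, (inner ℝ (fderiv ℝ pr (u x t) (Fu x t)) (u x t - pr (u x t)) : ℝ)) = 0 := by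
      have hzz : ∀ x, (inner ℝ (fderiv ℝ pr (u x t) (Fu x t)) (u x t - pr (u x t)) : ℝ) = 0 :=
        fun x => hinner x t ht
      simp [hzz]
    rw [hz, sub_zero] at hed
    exact hed
  have hanti : AntitoneOn E (Set.Icc 0 T) := by
    apply antitoneOn_of_deriv_nonpos (convex_Icc 0 T)
    · intro t ht
      exact ((hE' t ht).continuousAt).continuousWithinAt
    · intro t ht
      rw [interior_Icc] at ht
      exact ((hE' t (Set.mem_Icc_of_Ioo ht)).differentiableAt).differentiableWithinAt
    · intro t ht
      rw [interior_Icc] at ht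
      rw [(hE' t (Set.mem_Icc_of_Ioo ht)).deriv]
      have hpos : (0:ℝ) ≤ ∫ x, ‖iteratedFDeriv ℝ m (fun y => u y t - pr (u y t)) x‖ ^ 2 :=
        integral_nonneg fun x => by positivity
      linarith
  -- Step 3: E 0 = 0
  have hE0 : E 0 = 0 := by
    have hz : ∀ x, (1 / 2 : ℝ) * ‖u x 0 - pr (u x 0)‖ ^ 2 = 0 := by
      intro x
      have hmem := hu0 x
      have htube0 : infDist (u x 0) N < δN := by
        rw [infDist_zero_of_mem hmem]; exact hδN
      have hd : dist (u x 0) (pr (u x 0)) = 0 := by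
        rw [hprnearest _ htube0, infDist_zero_of_mem hmem]
      rw [dist_eq_norm] at hd
      rw [hd]; ring
    have heq0 : (fun x => (1 / 2 : ℝ) * ‖u x 0 - pr (u x 0)‖ ^ 2)
        = (fun _ => (0 : ℝ)) := funext hz
    show (∫ x, (1 / 2 : ℝ) * ‖u x 0 - pr (u x 0)‖ ^ 2) = 0
    rw [heq0, integral_zero]
  -- Step 4: conclude E t = 0 for t ∈ [0,T]
  intro x t ht
  have hEt0 : E t = 0 := by
    have h1 : E t ≤ E 0 := hanti (Set.left_mem_Icc.2 (le_of_lt hT)) ht ht.1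
    have h2 : (0:ℝ) ≤ E t := integral_nonneg fun x => by positivity
    rw [hE0] at h1
    linarith
  -- the integrand is continuous and nonnegative with zero integral, hence ≡ 0
  have hucont : Continuous fun x : EuclideanSpace ℝ (Fin n) => u x t :=
    husmooth.continuous.comp (continuous_id.prodMk continuous_const)
  have hprcont : Continuous fun x => pr (u x t) := by
    rw [continuous_iff_continuousAt]
    intro x
    exact ContinuousAt.comp (hprsmooth.continuousOn.continuousAt
      (hΩopen.mem_nhds (hutube x t ht))) hucont.continuousAt
  have hρcont : Continuous fun x => (1 / 2 : ℝ) * ‖u x t - pr (u x t)‖ ^ 2 :=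
    continuous_const.mul (((hucont.sub hprcont).norm).pow 2)
  have hae : (fun x => (1 / 2 : ℝ) * ‖u x t - pr (u x t)‖ ^ 2) =ᶠ[ae volume] 0 :=
    (integral_eq_zero_iff_of_nonneg (fun x => by positivity) (hρint t ht)).1 hEt0
  have heqz : (fun x => (1 / 2 : ℝ) * ‖u x t - pr (u x t)‖ ^ 2) = 0 :=
    (Continuous.ae_eq_iff_eq volume hρcont continuous_const).1 hae
  have hx0 : (1 / 2 : ℝ) * ‖u x t - pr (u x t)‖ ^ 2 = 0 := congrFun heqz x
  have hnorm : ‖u x t - pr (u x t)‖ = 0 := by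
    nlinarith [norm_nonneg (u x t - pr (u x t))]
  have heqp : u x t = pr (u x t) := sub_eq_zero.1 (norm_eq_zero.1 hnorm)
  rw [heqp]
  exact hprmem _ (hutube x t ht)
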